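/- arXiv:2012.15610 — 5 statements merged into one kernel-verified Lean document; each statement's English description precedes it below -/
import Mathlib

section
/- For every real number p, the family of weights (2ℕ)^{-pγ} := ∏_{i=1}^∞ (2i)^{-p γ_i}, indexed by multi-indices γ ∈ 𝓘, is summable — i.e. ∑_{γ ∈ 𝓘} (2ℕ)^{-pγ} < ∞ — if and only if p > 1. -/
/-- The set of multi-indices `𝓘`: finitely supported sequences of nonnegative integers.
We index from `0`, so the classical `i`-th entry (`i ≥ 1`) corresponds to `γ (i-1)`,
and the weight `(2ℕ)^{rγ} = ∏_{i=1}^∞ (2i)^{r γ_i}` becomes a finite product over the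
support of `γ`. -/
noncomputable def kondratievWeight (r : ℝ) (γ : ℕ →₀ ℕ) : ℝ :=
  ∏ i ∈ γ.support, ((2 * (i + 1) : ℝ)) ^ (r * (γ i : ℝ))

namespace KondratievAux

noncomputable def a (p : ℝ) (i : ℕ) : ℝ := (2 * (i + 1) : ℝ) ^ (-p)

lemma base_pos (i : ℕ) : (0 : ℝ) < 2 * (i + 1 : ℝ) := by positivity

lemma base_two_le (i : ℕ) : (2 : ℝ) ≤ 2 * ((i : ℝ) + 1) := by
  nlinarith [Nat.cast_nonneg (α := ℝ) i]

lemma a_nonneg (p : ℝ) (i : ℕ) : 0 ≤ a p i :=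
  Real.rpow_nonneg (base_pos i).le _

lemma a_pos (p : ℝ) (i : ℕ) : 0 < a p i :=
  Real.rpow_pos_of_pos (base_pos i) _

lemma weight_eq (p : ℝ) (γ : ℕ →₀ ℕ) :
    kondratievWeight (-p) γ = ∏ i ∈ γ.support, a p i ^ (γ i) := by
  unfold kondratievWeight a
  refine Finset.prod_congr rfl fun i _ => ?_
  rw [← Real.rpow_natCast ((2 * ((i : ℝ) + 1)) ^ (-p)) (γ i),
    ← Real.rpow_mul (base_pos i).le]

lemma weight_nonneg (p : ℝ) (γ : ℕ →₀ ℕ) : 0 ≤ kondratievWeight (-p) γ := by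
  rw [weight_eq]
  exact Finset.prod_nonneg fun i _ => pow_nonneg (a_nonneg p i) _

lemma a_eq (p : ℝ) (i : ℕ) :
    a p i = (2 : ℝ) ^ (-p) * ((i : ℝ) + 1) ^ (-p) := by
  unfold a
  rw [← Real.mul_rpow (by norm_num) (by positivity)]

lemma summable_a_iff (p : ℝ) : Summable (a p) ↔ 1 < p := by
  have h2 : ((2 : ℝ) ^ (-p)) ≠ 0 := by positivity
  have : Summable (a p) ↔ Summable (fun i : ℕ => ((i : ℝ) + 1) ^ (-p)) := by
    have ha : a p = fun i : ℕ => (2 : ℝ) ^ (-p) * ((i : ℝ) + 1) ^ (-p) := funext (a_eq p)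
    rw [ha]
    exact summable_mul_left_iff h2
  rw [this]
  have : (fun i : ℕ => ((i : ℝ) + 1) ^ (-p)) =
      (fun i : ℕ => ((i + 1 : ℕ) : ℝ) ^ (-p)) := by
    funext i; push_cast; ring_nf
  rw [this]
  have shift := summable_nat_add_iff (f := fun i : ℕ => ((i : ℝ)) ^ (-p)) 1
  rw [shift, Real.summable_nat_rpow]
  constructor <;> intro h <;> linarith

lemma a_le_half (p : ℝ) (hp : 1 < p) (i : ℕ) : a p i ≤ 1 / 2 := by
  have h1 : a p i ≤ (2 * ((i : ℝ) + 1)) ^ (-1 : ℝ) :=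
    Real.rpow_le_rpow_of_exponent_le (by linarith [base_two_le i]) (by linarith)
  have h2 : (2 * ((i : ℝ) + 1)) ^ (-1 : ℝ) = (2 * ((i : ℝ) + 1))⁻¹ := by
    rw [Real.rpow_neg_one]
  have h3 : (2 * ((i : ℝ) + 1))⁻¹ ≤ 1 / 2 := by
    rw [inv_le_comm₀ (base_pos i) (by norm_num)] at *
    · nlinarith [Nat.cast_nonneg (α := ℝ) i]
  calc a p i ≤ _ := h1
    _ = _ := h2
    _ ≤ 1 / 2 := h3

lemma inv_one_sub_le_exp {x : ℝ} (h0 : 0 ≤ x) (h1 : x ≤ 1 / 2) :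
    (1 - x)⁻¹ ≤ Real.exp (2 * x) := by
  have hx1 : 0 < 1 - x := by linarith
  have key : (1 - x)⁻¹ ≤ 1 + 2 * x := by
    rw [inv_le_iff_one_le_mul₀ hx1]
    nlinarith
  have : 2 * x + 1 ≤ Real.exp (2 * x) := Real.add_one_le_exp (2 * x)
  linarith

end KondratievAux

open KondratievAux in
/-- `∑_{γ ∈ 𝓘} (2ℕ)^{-pγ} < ∞` if and only if `p > 1`. -/
theorem summable_kondratievWeight_iff (p : ℝ) :
    Summable (fun γ : ℕ →₀ ℕ => kondratievWeight (-p) γ) ↔ 1 < p := by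
  constructor
  · intro h
    rw [← summable_a_iff p]
    have hinj : Function.Injective (fun i : ℕ => Finsupp.single i (1 : ℕ)) :=
      Finsupp.single_left_injective one_ne_zero
    have := h.comp_injective hinj
    refine this.congr fun i => ?_
    show kondratievWeight (-p) (Finsupp.single i 1) = a p i
    rw [weight_eq, Finsupp.support_single_ne_zero i one_ne_zero]
    simp [Finsupp.single_eq_same]
  · intro hp
    have ha0 : ∀ i, 0 ≤ a p i := a_nonneg p
    have haS : Summable (a p) := (summable_a_iff p).mpr hp
    have hahalf : ∀ i, a p i ≤ 1 / 2 := a_le_half p hp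
    have halt1 : ∀ i, a p i < 1 := fun i => lt_of_le_of_lt (hahalf i) (by norm_num)
    set C : ℝ := Real.exp (2 * ∑' i, a p i) with hC
    apply summable_of_sum_le (c := C) (fun γ => weight_nonneg p γ)
    intro s
    classical
    set t : Finset ℕ := s.sup Finsupp.support with ht
    set M : ℕ := s.sup (fun γ => γ.support.sup γ) with hM
    have hsupp : ∀ γ ∈ s, γ.support ⊆ t := fun γ hγ => Finset.le_sup hγ
    have hval : ∀ γ ∈ s, ∀ i, γ i < M + 1 := by
      intro γ hγ i
      rcases eq_or_ne (γ i) 0 with h0 | h0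
      · omega
      · have hi : i ∈ γ.support := Finsupp.mem_support_iff.mpr h0
        have h1 : γ i ≤ γ.support.sup γ := Finset.le_sup hi
        have h2 : γ.support.sup γ ≤ M := Finset.le_sup (f := fun γ => γ.support.sup γ) hγ
        omega
    -- rewrite each weight as a product over `t`
    have hw : ∀ γ ∈ s, kondratievWeight (-p) γ = ∏ x ∈ t.attach, a p x.1 ^ (γ x.1) := by
      intro γ hγ
      rw [weight_eq, Finset.prod_attach t (fun i => a p i ^ (γ i))]
      refine Finset.prod_subset (hsupp γ hγ) fun i _ hi => ?_
      rw [Finsupp.notMem_support_iff.mp hi, pow_zero]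
    -- the injection into the finite pi set
    set Φ : (ℕ →₀ ℕ) → (∀ i ∈ t, ℕ) := fun γ => fun i _ => γ i with hΦ
    have hΦmem : ∀ γ ∈ s, Φ γ ∈ t.pi (fun _ => Finset.range (M + 1)) := by
      intro γ hγ
      rw [Finset.mem_pi]
      intro i _
      exact Finset.mem_range.mpr (hval γ hγ i)
    have hΦinj : ∀ γ₁ ∈ s, ∀ γ₂ ∈ s, Φ γ₁ = Φ γ₂ → γ₁ = γ₂ := by
      intro γ₁ h₁ γ₂ h₂ heq
      ext i
      by_cases hi : i ∈ t
      · have := congrFun (congrFun heq i) hi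
        exact this
      · have h₁' : γ₁ i = 0 := Finsupp.notMem_support_iff.mp (fun hm => hi (hsupp γ₁ h₁ hm))
        have h₂' : γ₂ i = 0 := Finsupp.notMem_support_iff.mp (fun hm => hi (hsupp γ₂ h₂ hm))
        rw [h₁', h₂']
    set g : (∀ i ∈ t, ℕ) → ℝ := fun q => ∏ x ∈ t.attach, a p x.1 ^ (q x.1 x.2) with hg
    have step1 : ∑ γ ∈ s, kondratievWeight (-p) γ = ∑ γ ∈ s, g (Φ γ) := by
      refine Finset.sum_congr rfl fun γ hγ => ?_
      rw [hw γ hγ]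
    have step2 : ∑ γ ∈ s, g (Φ γ) = ∑ q ∈ s.image Φ, g q :=
      (Finset.sum_image hΦinj).symm
    have step3 : ∑ q ∈ s.image Φ, g q ≤
        ∑ q ∈ t.pi (fun _ => Finset.range (M + 1)), g q := by
      refine Finset.sum_le_sum_of_subset_of_nonneg ?_ fun q _ _ => ?_
      · intro q hq
        rcases Finset.mem_image.mp hq with ⟨γ, hγ, rfl⟩
        exact hΦmem γ hγ
      · exact Finset.prod_nonneg fun x _ => pow_nonneg (ha0 x.1) _
    have step4 : ∑ q ∈ t.pi (fun _ => Finset.range (M + 1)), g q =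
        ∏ i ∈ t, ∑ n ∈ Finset.range (M + 1), a p i ^ n :=
      (Finset.prod_sum t (fun _ => Finset.range (M + 1)) (fun i n => a p i ^ n)).symm
    have step5 : ∏ i ∈ t, ∑ n ∈ Finset.range (M + 1), a p i ^ n ≤
        ∏ i ∈ t, Real.exp (2 * a p i) := by
      refine Finset.prod_le_prod (fun i _ => Finset.sum_nonneg fun n _ =>
        pow_nonneg (ha0 i) n) fun i _ => ?_
      have hgeo : ∑ n ∈ Finset.range (M + 1), a p i ^ n ≤ (1 - a p i)⁻¹ := by
        have hs : Summable (fun n : ℕ => a p i ^ n) :=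
          summable_geometric_of_lt_one (ha0 i) (halt1 i)
        calc ∑ n ∈ Finset.range (M + 1), a p i ^ n ≤ ∑' n : ℕ, a p i ^ n :=
              Summable.sum_le_tsum _ (fun n _ => pow_nonneg (ha0 i) n) hs
          _ = (1 - a p i)⁻¹ := tsum_geometric_of_lt_one (ha0 i) (halt1 i)
      exact hgeo.trans (inv_one_sub_le_exp (ha0 i) (hahalf i))
    have step6 : ∏ i ∈ t, Real.exp (2 * a p i) ≤ C := by
      rw [← Real.exp_sum]
      apply Real.exp_le_exp.mpr
      rw [← Finset.mul_sum]
      have := Summable.sum_le_tsum t (fun i _ => ha0 i) haS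
      nlinarith [this]
    calc ∑ γ ∈ s, kondratievWeight (-p) γ = ∑ q ∈ s.image Φ, g q := by
          rw [step1, step2]
      _ ≤ _ := step3
      _ = _ := step4
      _ ≤ _ := step5
      _ ≤ C := step6
end

section
/- For every real number p > 1, the infinite product ∏_{i=1}^∞ (1 − (2i)^{-p})^{-1} converges and ∑_{γ ∈ 𝓘} (2ℕ)^{-pγ} = ∏_{i=1}^∞ (1 − (2i)^{-p})^{-1}. -/
/-!
Each factor `(1 - aᵢ)⁻¹` is the geometric series `∑ₙ aᵢⁿ`, so expanding the finite product
`∏_{i ∈ t} (1 - aᵢ)⁻¹` gives exactly the sum of `a^γ` over the multi-indices `γ` supported in `t`.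
As all terms are nonnegative, the supremum of the finite partial sums of `∑_γ a^γ` is therefore
the limit of these partial products, which exists as soon as `∑ᵢ aᵢ < ∞`; for `aᵢ = (2i)^{-p}`
this is the condition `p > 1`.
-/

open Finset Filter

namespace Finsupp

variable {ι M : Type*} [DecidableEq ι] [AddZeroClass M]

noncomputable def supportSubsetInsertEquiv {j : ι} {s : Finset ι} (hj : j ∉ s) :
    M × {γ : ι →₀ M // γ.support ⊆ s} ≃ {γ : ι →₀ M // γ.support ⊆ insert j s} where
  toFun x := ⟨single j x.1 + x.2, support_add.trans <|
    union_subset (support_single_subset.trans (by simp)) (x.2.2.trans (subset_insert _ _))⟩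
  invFun γ := (γ.1 j, ⟨γ.1.erase j, by
    rw [support_erase]
    exact fun i hi =>
      (mem_insert.mp (γ.2 (mem_of_mem_erase hi))).resolve_left (ne_of_mem_erase hi)⟩)
  left_inv := by
    rintro ⟨n, δ, hδ⟩
    have hδj : δ j = 0 := notMem_support_iff.mp fun h => hj (hδ h)
    ext
    · simp [hδj]
    · simp [erase_add, erase_of_notMem_support (notMem_support_iff.mpr hδj)]
  right_inv γ := Subtype.ext (single_add_erase j γ.1)

@[simp]
lemma coe_supportSubsetInsertEquiv_apply {j : ι} {s : Finset ι} (hj : j ∉ s)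
    (x : M × {γ : ι →₀ M // γ.support ⊆ s}) :
    (supportSubsetInsertEquiv hj x : ι →₀ M) = single j x.1 + x.2 := rfl

end Finsupp

section MultiPow

variable {ι R : Type*}

noncomputable def multiPow [CommMonoid R] (a : ι → R) (γ : ι →₀ ℕ) : R :=
  γ.prod fun i n => a i ^ n

lemma multiPow_single_add [CommMonoid R] [DecidableEq ι] (a : ι → R) (j : ι) (n : ℕ) (γ : ι →₀ ℕ) :
    multiPow a (Finsupp.single j n + γ) = a j ^ n * multiPow a γ := by
  rw [multiPow, multiPow,
    Finsupp.prod_add_index' (fun _ => pow_zero _) (fun _ _ _ => pow_add _ _ _)]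
  congr 1
  exact Finsupp.prod_single_index (pow_zero _)

variable {a : ι → ℝ}

lemma multiPow_nonneg (ha : ∀ i, 0 ≤ a i) (γ : ι →₀ ℕ) : 0 ≤ multiPow a γ :=
  prod_nonneg fun i _ => pow_nonneg (ha i) _

lemma hasSum_multiPow_of_support_subset (ha₀ : ∀ i, 0 ≤ a i) (ha₁ : ∀ i, a i < 1) (s : Finset ι) :
    HasSum (fun γ : {γ : ι →₀ ℕ // γ.support ⊆ s} => multiPow a γ) (∏ i ∈ s, (1 - a i)⁻¹) := by
  classical
  induction s using Finset.induction_on with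
  | empty =>
    rw [prod_empty]
    convert hasSum_single (⟨0, empty_subset _⟩ : {γ : ι →₀ ℕ // γ.support ⊆ ∅}) fun γ hγ =>
      (hγ (Subtype.ext (Finsupp.support_eq_empty.mp (subset_empty.mp γ.2)))).elim
    exact Finsupp.prod_zero_index.symm
  | @insert j s hj ih =>
    have hgeom : HasSum (fun n => a j ^ n) (1 - a j)⁻¹ := hasSum_geometric_of_lt_one (ha₀ j) (ha₁ j)
    have hpair := hgeom.mul ih <| hgeom.summable.mul_of_nonneg ih.summable
      (fun n => pow_nonneg (ha₀ j) n) fun γ => multiPow_nonneg ha₀ γ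
    rw [prod_insert hj, ← (Finsupp.supportSubsetInsertEquiv hj).hasSum_iff]
    simpa only [Function.comp_def, Finsupp.coe_supportSubsetInsertEquiv_apply, multiPow_single_add]
      using hpair

lemma multipliable_inv_one_sub (ha : ∀ i, a i ≠ 1) (hsum : Summable a) :
    Multipliable fun i => (1 - a i)⁻¹ := by
  have hne : ∀ i, 1 + -a i ≠ 0 := fun i => by rw [← sub_eq_add_neg, sub_ne_zero]; exact (ha i).symm
  simpa only [sub_eq_add_neg] using (Real.multipliable_one_add_of_summable hsum.neg).inv₀
    (tprod_one_add_ne_zero_of_summable hne hsum.neg.norm)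

theorem hasSum_multiPow (ha₀ : ∀ i, 0 ≤ a i) (ha₁ : ∀ i, a i < 1) (hsum : Summable a) :
    HasSum (multiPow a) (∏' i, (1 - a i)⁻¹) := by
  classical
  have hprod := (multipliable_inv_one_sub (fun i => (ha₁ i).ne) hsum).hasProd
  have hpartial (t : Finset ι) : HasSum ({γ | γ.support ⊆ t}.indicator (multiPow a))
      (∏ i ∈ t, (1 - a i)⁻¹) :=
    hasSum_subtype_iff_indicator.mp (hasSum_multiPow_of_support_subset ha₀ ha₁ t)
  refine hasSum_of_isLUB_of_nonneg _ (multiPow_nonneg ha₀) ⟨?_, fun b hb => ?_⟩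
  · rintro _ ⟨T, rfl⟩
    refine ge_of_tendsto hprod ?_
    filter_upwards [eventually_ge_atTop (T.sup Finsupp.support)] with t ht
    calc ∑ γ ∈ T, multiPow a γ = ∑ γ ∈ T, {γ | γ.support ⊆ t}.indicator (multiPow a) γ :=
          sum_congr rfl fun γ hγ =>
            (Set.indicator_of_mem ((le_sup (f := Finsupp.support) hγ).trans ht) _).symm
      _ ≤ ∏ i ∈ t, (1 - a i)⁻¹ :=
          sum_le_hasSum T (fun γ _ => Set.indicator_nonneg (fun γ _ => multiPow_nonneg ha₀ γ) γ)
            (hpartial t)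
  · refine le_of_tendsto' hprod fun t => hasSum_le_of_sum_le (hpartial t) fun T => ?_
    exact (sum_le_sum fun γ _ => Set.indicator_le_self' (fun γ _ => multiPow_nonneg ha₀ γ) γ).trans
      (hb ⟨T, rfl⟩)

end MultiPow

lemma kondratievWeight_eq_multiPow (r : ℝ) (γ : ℕ →₀ ℕ) :
    kondratievWeight r γ = multiPow (fun i : ℕ => ((2 * (i + 1) : ℝ)) ^ r) γ := by
  refine prod_congr rfl fun i _ => ?_
  show _ = ((2 * ((i : ℝ) + 1)) ^ r) ^ γ i
  rw [← Real.rpow_natCast, ← Real.rpow_mul (by positivity)]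

lemma summable_two_mul_nat_succ_rpow_neg {p : ℝ} (hp : 1 < p) :
    Summable fun i : ℕ => ((2 * (i + 1) : ℝ)) ^ (-p) := by
  have h : Summable fun i : ℕ => ((i + 1 : ℕ) : ℝ) ^ (-p) :=
    (summable_nat_add_iff 1).mpr (Real.summable_nat_rpow.mpr (by linarith))
  refine (h.mul_left ((2 : ℝ) ^ (-p))).congr fun i => ?_
  rw [← Real.mul_rpow (by norm_num) (by positivity), Nat.cast_add_one]

/-- for `p > 1`, the infinite product `∏_{i=1}^∞ (1 − (2i)^{-p})^{-1}`
converges and equals `∑_{γ ∈ 𝓘} (2ℕ)^{-pγ}`. -/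
theorem tsum_kondratievWeight_eq_tprod (p : ℝ) (hp : 1 < p) :
    Multipliable (fun i : ℕ => (1 - ((2 * (i + 1) : ℝ)) ^ (-p))⁻¹) ∧
      ∑' γ : ℕ →₀ ℕ, kondratievWeight (-p) γ =
        ∏' i : ℕ, (1 - ((2 * (i + 1) : ℝ)) ^ (-p))⁻¹ := by
  have ha₀ (i : ℕ) : 0 ≤ ((2 * (i + 1) : ℝ)) ^ (-p) := by positivity
  have ha₁ (i : ℕ) : ((2 * (i + 1) : ℝ)) ^ (-p) < 1 :=
    Real.rpow_lt_one_of_one_lt_of_neg (by linarith [(i.cast_nonneg : (0 : ℝ) ≤ i)]) (by linarith)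
  have hsum := summable_two_mul_nat_succ_rpow_neg hp
  refine ⟨multipliable_inv_one_sub (fun i => (ha₁ i).ne) hsum, ?_⟩
  simp_rw [kondratievWeight_eq_multiPow]
  exact (hasSum_multiPow ha₀ ha₁ hsum).tsum_eq
end

section
/- Moderateness of regularizations of distributional potentials of finite order: let f : ℝ^d → ℝ be continuous with compact support, let φ : ℝ^d → ℝ be smooth with compact support, and let k ∈ ℕ. Then there exists C > 0 such that for every ε ∈ (0,1], sup_{x ∈ ℝ^d} ‖(f ⋆ D^k φ_ε)(x)‖ ≤ C ε^{-k}, where D^k φ_ε denotes the k-th iterated (total) derivative of the rescaled function φ_ε. Equivalently, the regularizing net q_ε = q ⋆ φ_ε of the compactly supported distribution q = ∂^α f, |α| = k, is L^∞-moderate. -/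
set_option maxHeartbeats 1000000

open Set MeasureTheory

/-- The mollifier-type rescaling `φ_ε(x) = ε^{-d} φ(x/ε)`. -/
noncomputable def rescaleMollifier {d : ℕ} (φ : (Fin d → ℝ) → ℝ) (ε : ℝ) :
    (Fin d → ℝ) → ℝ :=
  fun x => (ε ^ d)⁻¹ * φ (ε⁻¹ • x)

/-- moderateness of regularizations of distributional potentials of finite
order: for `f` continuous with compact support, `φ` smooth with compact support and
`k ∈ ℕ`, there is `C > 0` with
`sup_x ‖(f ⋆ D^k φ_ε)(x)‖ ≤ C ε^{-k}` for all `ε ∈ (0,1]`; i.e. the regularizing net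
`q_ε = q ⋆ φ_ε` of `q = ∂^α f`, `|α| = k`, is `L^∞`-moderate. -/
theorem regularization_moderate
    {d : ℕ} (f φ : (Fin d → ℝ) → ℝ) (k : ℕ)
    (hf : Continuous f) (hfc : HasCompactSupport f)
    (hφ : ContDiff ℝ (⊤ : ℕ∞) φ) (hφc : HasCompactSupport φ) :
    ∃ C > 0, ∀ ε ∈ Ioc (0 : ℝ) 1, ∀ x : Fin d → ℝ,
      ‖convolution f (iteratedFDeriv ℝ k (rescaleMollifier φ ε))
          (ContinuousLinearMap.lsmul ℝ ℝ) volume x‖ ≤ C * (ε ^ k)⁻¹ := by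
  obtain ⟨Cf, hCf⟩ := hf.norm.bounded_above_of_compact_support hfc.norm
  simp only [norm_norm] at hCf
  have hCf0 : 0 ≤ Cf := (norm_nonneg _).trans (hCf 0)
  set M : ℝ := ∫ z, ‖iteratedFDeriv ℝ k φ z‖ with hM
  have hM0 : 0 ≤ M := integral_nonneg fun z => norm_nonneg _
  refine ⟨(Cf + 1) * (M + 1), by positivity, ?_⟩
  rintro ε ⟨hε, hε1⟩ x
  have hεne : ε ≠ 0 := ne_of_gt hε
  -- the linear scaling map
  set L : (Fin d → ℝ) →L[ℝ] (Fin d → ℝ) := ε⁻¹ • ContinuousLinearMap.id ℝ (Fin d → ℝ) with hL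
  have hLapp : ∀ y, L y = ε⁻¹ • y := fun y => rfl
  have hLnorm : ‖L‖ ≤ ε⁻¹ := by
    rw [hL]
    calc ‖ε⁻¹ • ContinuousLinearMap.id ℝ (Fin d → ℝ)‖
        ≤ ‖ε⁻¹‖ * ‖ContinuousLinearMap.id ℝ (Fin d → ℝ)‖ :=
          ContinuousLinearMap.opNorm_smul_le _ _
      _ ≤ ε⁻¹ * 1 := by
          apply mul_le_mul _ ContinuousLinearMap.norm_id_le (norm_nonneg _) (by positivity)
          rw [Real.norm_eq_abs, abs_of_pos (by positivity)]
      _ = ε⁻¹ := mul_one _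
  have hresc : rescaleMollifier φ ε = fun y => (ε ^ d)⁻¹ • (φ ∘ L) y := by
    funext y; simp [rescaleMollifier, hLapp, smul_eq_mul]
  have hcomp : ContDiff ℝ (⊤ : ℕ∞) (φ ∘ L) := hφ.comp L.contDiff
  have hrescCD : ContDiff ℝ (⊤ : ℕ∞) (rescaleMollifier φ ε) := by
    rw [hresc]; exact hcomp.const_smul _
  have hcompCS : HasCompactSupport (φ ∘ L) := by
    have := hφc.comp_homeomorph (Homeomorph.smulOfNeZero (ε⁻¹) (by positivity)
      (α := Fin d → ℝ))
    exact this
  have hrescCS : HasCompactSupport (rescaleMollifier φ ε) := by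
    rw [hresc]
    simp only [smul_eq_mul]
    exact hcompCS.mul_left
  obtain ⟨g, hg⟩ : ∃ g', g' = iteratedFDeriv ℝ k (rescaleMollifier φ ε) := ⟨_, rfl⟩
  rw [← hg]
  have hgc : HasCompactSupport g := hg ▸ hrescCS.iteratedFDeriv k
  have hgcont : Continuous g := hg ▸ hrescCD.continuous_iteratedFDeriv (by exact_mod_cast le_top)
  -- pointwise bound on the derivative of the rescaled mollifier
  have hptwise : ∀ z, ‖g z‖ ≤ (ε ^ d)⁻¹ * ((ε⁻¹) ^ k * ‖iteratedFDeriv ℝ k φ (ε⁻¹ • z)‖) := by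
    intro z
    have hform : g z = (ε ^ d)⁻¹ •
        ((iteratedFDeriv ℝ k φ (L z)).compContinuousLinearMap fun _ => L) := by
      rw [hg, hresc, iteratedFDeriv_const_smul_apply' ((hcomp.of_le (by exact_mod_cast le_top)).contDiffAt),
        L.iteratedFDeriv_comp_right (hφ.of_le (by exact_mod_cast le_top)) z le_rfl]
    have h1 : ‖((iteratedFDeriv ℝ k φ (L z)).compContinuousLinearMap fun _ => L)‖ ≤
        ‖iteratedFDeriv ℝ k φ (L z)‖ * ∏ _i : Fin k, ‖L‖ :=
      ContinuousMultilinearMap.norm_compContinuousLinearMap_le _ _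
    have h2 : (∏ _i : Fin k, ‖L‖) ≤ (ε⁻¹) ^ k := by
      rw [Finset.prod_const, Finset.card_univ, Fintype.card_fin]
      exact pow_le_pow_left₀ (norm_nonneg _) hLnorm k
    have h4 : ‖iteratedFDeriv ℝ k φ (L z)‖ * ∏ _i : Fin k, ‖L‖ ≤
        (ε⁻¹) ^ k * ‖iteratedFDeriv ℝ k φ (ε⁻¹ • z)‖ := by
      rw [hLapp, mul_comm]
      exact mul_le_mul_of_nonneg_right h2 (norm_nonneg _)
    calc ‖g z‖ = ‖(ε ^ d)⁻¹ •
          ((iteratedFDeriv ℝ k φ (L z)).compContinuousLinearMap fun _ => L)‖ := by rw [hform]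
      _ ≤ ‖(ε ^ d)⁻¹‖ * ‖((iteratedFDeriv ℝ k φ (L z)).compContinuousLinearMap fun _ => L)‖ :=
          ContinuousMultilinearMap.opNorm_smul_le _ _
      _ ≤ (ε ^ d)⁻¹ * ((ε⁻¹) ^ k * ‖iteratedFDeriv ℝ k φ (ε⁻¹ • z)‖) := by
          rw [Real.norm_eq_abs, abs_of_pos (by positivity)]
          exact mul_le_mul_of_nonneg_left (h1.trans h4) (by positivity)
  -- integral bound on ‖g‖
  have hDcont : Continuous fun z => ‖iteratedFDeriv ℝ k φ z‖ :=
    (hφ.continuous_iteratedFDeriv (by exact_mod_cast le_top)).norm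
  have hDcs : HasCompactSupport fun z => ‖iteratedFDeriv ℝ k φ z‖ :=
    (hφc.iteratedFDeriv k).norm
  have hgnormint : Integrable (fun z => ‖g z‖) volume :=
    hgcont.norm.integrable_of_hasCompactSupport hgc.norm
  have hrhsint : Integrable
      (fun z => (ε ^ d)⁻¹ * ((ε⁻¹) ^ k * ‖iteratedFDeriv ℝ k φ (ε⁻¹ • z)‖)) volume := by
    apply Continuous.integrable_of_hasCompactSupport
    · exact continuous_const.mul (continuous_const.mul
        (hDcont.comp (continuous_const_smul ε⁻¹)))
    · have hc : HasCompactSupport fun z => ‖iteratedFDeriv ℝ k φ (ε⁻¹ • z)‖ :=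
        hDcs.comp_homeomorph (Homeomorph.smulOfNeZero (ε⁻¹) (by positivity) (α := Fin d → ℝ))
      exact (hc.mul_left).mul_left
  have hintg : (∫ z, ‖g z‖) ≤ (ε ^ k)⁻¹ * M := by
    calc (∫ z, ‖g z‖)
        ≤ ∫ z, (ε ^ d)⁻¹ * ((ε⁻¹) ^ k * ‖iteratedFDeriv ℝ k φ (ε⁻¹ • z)‖) :=
          integral_mono hgnormint hrhsint hptwise
      _ = (ε ^ d)⁻¹ * ((ε⁻¹) ^ k * ∫ z, ‖iteratedFDeriv ℝ k φ (ε⁻¹ • z)‖) := by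
          rw [integral_const_mul, integral_const_mul]
      _ = (ε ^ d)⁻¹ * ((ε⁻¹) ^ k * (ε ^ d * M)) := by
          rw [Measure.integral_comp_inv_smul_of_nonneg volume
            (fun z => ‖iteratedFDeriv ℝ k φ z‖) hε.le]
          simp [Module.finrank_fin_fun, smul_eq_mul, hM]
      _ = (ε ^ k)⁻¹ * M := by
          rw [inv_pow]
          field_simp
  -- main estimate
  have hconvint : Integrable (fun y => Cf * ‖g (x - y)‖) volume := by
    apply Continuous.integrable_of_hasCompactSupport
    · exact continuous_const.mul (hgcont.norm.comp (continuous_const.sub continuous_id))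
    · have h : HasCompactSupport fun y => ‖g (x - y)‖ := by
        have := hgc.norm.comp_homeomorph
          ((Homeomorph.neg (Fin d → ℝ)).trans (Homeomorph.addLeft x))
        have heq : (fun y => ‖g (x - y)‖) =
            (fun z => ‖g z‖) ∘ ((Homeomorph.neg (Fin d → ℝ)).trans (Homeomorph.addLeft x)) := by
          funext y
          simp [Function.comp, sub_eq_add_neg]
        rw [heq]
        exact this
      exact h.mul_left
  calc ‖convolution f g (ContinuousLinearMap.lsmul ℝ ℝ) volume x‖
      = ‖∫ y, f y • g (x - y)‖ := by
        simp only [convolution_def, ContinuousLinearMap.lsmul_apply]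
    _ ≤ ∫ y, ‖f y • g (x - y)‖ := norm_integral_le_integral_norm _
    _ ≤ ∫ y, Cf * ‖g (x - y)‖ := by
        apply integral_mono_of_nonneg
        · filter_upwards with y; positivity
        · exact hconvint
        · filter_upwards with y
          calc ‖f y • g (x - y)‖ ≤ ‖f y‖ * ‖g (x - y)‖ :=
                ContinuousMultilinearMap.opNorm_smul_le _ _
            _ ≤ Cf * ‖g (x - y)‖ :=
                mul_le_mul_of_nonneg_right (hCf y) (norm_nonneg _)
    _ = Cf * ∫ y, ‖g (x - y)‖ := integral_const_mul _ _
    _ = Cf * ∫ z, ‖g z‖ := by rw [integral_sub_left_eq_self (fun z => ‖g z‖) volume x]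
    _ ≤ Cf * ((ε ^ k)⁻¹ * M) := mul_le_mul_of_nonneg_left hintg hCf0
    _ ≤ (Cf + 1) * (M + 1) * (ε ^ k)⁻¹ := by
        have h1 : Cf * M ≤ (Cf + 1) * (M + 1) := by nlinarith
        have h2 : (0:ℝ) ≤ (ε ^ k)⁻¹ := by positivity
        calc Cf * ((ε ^ k)⁻¹ * M) = (Cf * M) * (ε ^ k)⁻¹ := by ring
          _ ≤ (Cf + 1) * (M + 1) * (ε ^ k)⁻¹ := mul_le_mul_of_nonneg_right h1 h2
end

section
/- Existence of very weak solutions (mild form): in the setting below, suppose that for each ε ∈ (0,1] a bounded linear operator B_ε on E satisfies the log-type bound ‖B_ε‖ ≤ N_q log(1/ε) for some constant N_q > 0, and that u_ε : [0,T] → E is a continuous mild solution with potential B_ε (with the same (T_s), f and g for all ε). Then the net (u_ε)_{ε∈(0,1]} is C([0,T];E)-moderate: there exist C > 0 and N ≥ 0 such that sup_{t ∈ [0,T]} ‖u_ε(t)‖_E ≤ C ε^{-N} for all ε ∈ (0,1]. -/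
/-!
On `[0, T]` the semigroup is bounded by `K = M e^{wT}`, so the mild formula gives
`‖u_ε t‖ ≤ a + K ‖B_ε‖ ∫₀ᵗ ‖u_ε s‖` with `a` independent of `ε`, and Grönwall's inequality
yields `‖u_ε t‖ ≤ a e^{K ‖B_ε‖ T}`. The logarithmic bound on `‖B_ε‖` turns this exponential
into the power `ε^{-K N_q T}`.
-/

open Set MeasureTheory

lemma add_mul_gronwallBound_zero (a b x : ℝ) :
    a + b * gronwallBound 0 b a x = a * Real.exp (b * x) := by
  rcases eq_or_ne b 0 with rfl | hb
  · simp
  · rw [gronwallBound_of_K_ne_0 hb]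
    field_simp
    ring

theorem le_mul_exp_of_le_add_mul_integral {ψ : ℝ → ℝ} {a b T : ℝ}
    (hψ : ContinuousOn ψ (Icc 0 T)) (hb : 0 ≤ b)
    (h : ∀ t ∈ Icc 0 T, ψ t ≤ a + b * ∫ s in (0 : ℝ)..t, ψ s) :
    ∀ t ∈ Icc 0 T, ψ t ≤ a * Real.exp (b * t) := by
  intro t ht
  have hT : 0 ≤ T := ht.1.trans ht.2
  set ψ' : ℝ → ℝ := IccExtend hT ((Icc 0 T).domRestrict ψ)
  have hψ'_eq : EqOn ψ' ψ (Icc 0 T) := fun x hx => IccExtend_of_mem hT _ hx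
  have hψ'_cont : Continuous ψ' := continuous_IccExtend_iff.mpr hψ.domRestrict
  set φ : ℝ → ℝ := fun x => ∫ s in (0 : ℝ)..x, ψ' s
  have hφ_deriv : ∀ x, HasDerivAt φ (ψ' x) x := fun x =>
    (hψ'_cont.integral_hasStrictDerivAt 0 x).hasDerivAt
  have hφ_eq : ∀ x ∈ Icc 0 T, φ x = ∫ s in (0 : ℝ)..x, ψ s := fun x hx =>
    intervalIntegral.integral_congr <| hψ'_eq.mono <| by
      rw [uIcc_of_le hx.1]; exact Icc_subset_Icc_right hx.2
  have hφ_le : ∀ x ∈ Icc 0 T, φ x ≤ gronwallBound 0 b a (x - 0) :=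
    le_gronwallBound_of_liminf_deriv_right_le
      (continuous_iff_continuousAt.mpr fun x => (hφ_deriv x).continuousAt).continuousOn
      (fun x _ _ hr => (hφ_deriv x).hasDerivWithinAt.liminf_right_slope_le hr)
      (by simp [φ])
      (fun x hx => by
        have hx' : x ∈ Icc 0 T := Ico_subset_Icc_self hx
        rw [hψ'_eq hx', hφ_eq x hx']
        linarith [h x hx'])
  calc ψ t ≤ a + b * φ t := by rw [hφ_eq t ht]; exact h t ht
    _ ≤ a + b * gronwallBound 0 b a t := by
        simpa using add_le_add_left (mul_le_mul_of_nonneg_left (hφ_le t ht) hb) a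
    _ = a * Real.exp (b * t) := add_mul_gronwallBound_zero a b t

/-- Mild solution on `[0, T]` of `∂ₜu = (𝓛 - B) u + f`, `u 0 = g`, where `𝓛` generates `Tt`. -/
def IsMildSolution {E : Type*} [NormedAddCommGroup E] [NormedSpace ℝ E]
    (Tt : ℝ → E →L[ℝ] E) (B : E →L[ℝ] E) (f : ℝ → E) (g : E) (T : ℝ) (u : ℝ → E) : Prop :=
  ContinuousOn u (Icc 0 T) ∧
    ∀ t ∈ Icc 0 T, u t = Tt t g + ∫ s in (0 : ℝ)..t, Tt (t - s) (f s - B (u s))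

namespace IsMildSolution

variable {E : Type*} [NormedAddCommGroup E] [NormedSpace ℝ E]
  {Tt : ℝ → E →L[ℝ] E} {B : E →L[ℝ] E} {f : ℝ → E} {g : E} {T K F : ℝ} {u : ℝ → E}

theorem norm_le_add_mul_integral (hu : IsMildSolution Tt B f g T u)
    (hTt : ∀ s ∈ Icc 0 T, ‖Tt s‖ ≤ K) (hf : ∀ s ∈ Icc 0 T, ‖f s‖ ≤ F) :
    ∀ t ∈ Icc 0 T,
      ‖u t‖ ≤ K * ‖g‖ + K * F * T + K * ‖B‖ * ∫ s in (0 : ℝ)..t, ‖u s‖ := by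
  intro t ht
  have hK : 0 ≤ K := (norm_nonneg _).trans (hTt t ht)
  have hF : 0 ≤ F := (norm_nonneg _).trans (hf t ht)
  have hsub : Icc 0 t ⊆ Icc 0 T := Icc_subset_Icc_right ht.2
  have hu_int : IntervalIntegrable (fun s => ‖u s‖) volume 0 t :=
    (hu.1.mono hsub).norm.intervalIntegrable_of_Icc ht.1
  have hbound_int : IntervalIntegrable (fun s => K * F + K * ‖B‖ * ‖u s‖) volume 0 t :=
    intervalIntegrable_const.add (hu_int.const_mul _)
  have hintegrand : ∀ s ∈ Ioc 0 t,
      ‖Tt (t - s) (f s - B (u s))‖ ≤ K * F + K * ‖B‖ * ‖u s‖ := fun s hs =>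
    calc ‖Tt (t - s) (f s - B (u s))‖ ≤ K * (‖f s‖ + ‖B‖ * ‖u s‖) :=
          (Tt (t - s)).le_of_opNorm_le (hTt _ ⟨by linarith [hs.2], by linarith [hs.1, ht.2]⟩) _
            |>.trans <| by gcongr; exact (norm_sub_le _ _).trans (by gcongr; exact B.le_opNorm _)
      _ ≤ K * F + K * ‖B‖ * ‖u s‖ := by
          nlinarith [hf s (hsub (Ioc_subset_Icc_self hs))]
  have hintegral : ‖∫ s in (0 : ℝ)..t, Tt (t - s) (f s - B (u s))‖ ≤
      K * F * t + K * ‖B‖ * ∫ s in (0 : ℝ)..t, ‖u s‖ := by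
    refine (intervalIntegral.norm_integral_le_of_norm_le ht.1
      (Filter.Eventually.of_forall hintegrand) hbound_int).trans_eq ?_
    rw [intervalIntegral.integral_add intervalIntegrable_const (hu_int.const_mul _),
      intervalIntegral.integral_const, intervalIntegral.integral_const_mul]
    simp only [sub_zero, smul_eq_mul]
    ring
  calc ‖u t‖ ≤ ‖Tt t g‖ + ‖∫ s in (0 : ℝ)..t, Tt (t - s) (f s - B (u s))‖ := by
        rw [hu.2 t ht]; exact norm_add_le _ _
    _ ≤ K * ‖g‖ + (K * F * t + K * ‖B‖ * ∫ s in (0 : ℝ)..t, ‖u s‖) :=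
        add_le_add ((Tt t).le_of_opNorm_le (hTt t ht) g) hintegral
    _ ≤ K * ‖g‖ + K * F * T + K * ‖B‖ * ∫ s in (0 : ℝ)..t, ‖u s‖ := by
        nlinarith [mul_nonneg hK hF, ht.2]

theorem norm_le_mul_exp (hu : IsMildSolution Tt B f g T u)
    (hTt : ∀ s ∈ Icc 0 T, ‖Tt s‖ ≤ K) (hf : ∀ s ∈ Icc 0 T, ‖f s‖ ≤ F) :
    ∀ t ∈ Icc 0 T, ‖u t‖ ≤ (K * ‖g‖ + K * F * T) * Real.exp (K * ‖B‖ * T) := by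
  intro t ht
  have hK : 0 ≤ K := (norm_nonneg _).trans (hTt t ht)
  have hF : 0 ≤ F := (norm_nonneg _).trans (hf t ht)
  have hT : 0 ≤ T := ht.1.trans ht.2
  calc ‖u t‖ ≤ (K * ‖g‖ + K * F * T) * Real.exp (K * ‖B‖ * t) :=
        le_mul_exp_of_le_add_mul_integral hu.1.norm (by positivity)
          (hu.norm_le_add_mul_integral hTt hf) t ht
    _ ≤ (K * ‖g‖ + K * F * T) * Real.exp (K * ‖B‖ * T) := by gcongr; exact ht.2

end IsMildSolution

theorem very_weak_solution_moderate_general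
    {E : Type*} [NormedAddCommGroup E] [NormedSpace ℝ E]
    (T : ℝ) (hT : 0 < T) (M w : ℝ) (hM : 0 < M) (hw : 0 ≤ w)
    (Tt : ℝ → E →L[ℝ] E)
    (hTbound : ∀ s ∈ Icc (0 : ℝ) T, ‖Tt s‖ ≤ M * Real.exp (w * s))
    (g : E) (f : ℝ → E) (hf : ContinuousOn f (Icc 0 T))
    (Bε : ℝ → E →L[ℝ] E) (Nq : ℝ) (hNq : 0 < Nq)
    (hBlog : ∀ ε ∈ Ioc (0 : ℝ) 1, ‖Bε ε‖ ≤ Nq * Real.log (1 / ε))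
    (uε : ℝ → ℝ → E)
    (huc : ∀ ε ∈ Ioc (0 : ℝ) 1, ContinuousOn (uε ε) (Icc 0 T))
    (humild : ∀ ε ∈ Ioc (0 : ℝ) 1, ∀ t ∈ Icc (0 : ℝ) T,
      uε ε t = Tt t g + ∫ s in (0 : ℝ)..t, Tt (t - s) (f s - Bε ε (uε ε s))) :
    ∃ C > (0 : ℝ), ∃ N : ℝ, 0 ≤ N ∧ ∀ ε ∈ Ioc (0 : ℝ) 1, ∀ t ∈ Icc (0 : ℝ) T,
      ‖uε ε t‖ ≤ C * ε ^ (-N) := by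
  obtain ⟨F, hF⟩ := isCompact_Icc.exists_bound_of_continuousOn hf
  have hTt : ∀ s ∈ Icc 0 T, ‖Tt s‖ ≤ M * Real.exp (w * T) := fun s hs =>
    (hTbound s hs).trans <| by gcongr; exact hs.2
  set K := M * Real.exp (w * T)
  have hK : 0 ≤ K := by positivity
  set C := max (K * ‖g‖ + K * F * T) 1
  refine ⟨C, lt_max_of_lt_right one_pos, K * Nq * T, by positivity, fun ε hε t ht => ?_⟩
  have hsol : IsMildSolution Tt (Bε ε) f g T (uε ε) := ⟨huc ε hε, humild ε hε⟩
  calc ‖uε ε t‖ ≤ (K * ‖g‖ + K * F * T) * Real.exp (K * ‖Bε ε‖ * T) :=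
        hsol.norm_le_mul_exp hTt hF t ht
    _ ≤ C * Real.exp (K * (Nq * Real.log (1 / ε)) * T) := by
        gcongr
        exacts [le_max_left _ _, hBlog ε hε]
    _ = C * ε ^ (-(K * Nq * T)) := by
        rw [Real.rpow_def_of_pos hε.1, one_div, Real.log_inv]
        ring_nf

/-- existence of very weak solutions (mild form): if the potentials `B_ε`
satisfy the log-type bound `‖B_ε‖ ≤ N_q log(1/ε)` and `u_ε` are continuous mild
solutions with potentials `B_ε` (same semigroup `T_s`, force `f` and datum `g`), then
the net `(u_ε)` is `C([0,T];E)`-moderate: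
`sup_{t∈[0,T]} ‖u_ε(t)‖ ≤ C ε^{-N}` for some `C > 0`, `N ≥ 0` and all `ε ∈ (0,1]`. -/
theorem very_weak_solution_moderate
    {E : Type*} [NormedAddCommGroup E] [NormedSpace ℝ E] [CompleteSpace E]
    (T : ℝ) (hT : 0 < T) (M w : ℝ) (hM : 0 < M) (hw : 0 ≤ w)
    (Tt : ℝ → E →L[ℝ] E)
    (hTcont : ∀ x : E, ContinuousOn (fun s => Tt s x) (Icc 0 T))
    (hTbound : ∀ s ∈ Icc (0 : ℝ) T, ‖Tt s‖ ≤ M * Real.exp (w * s))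
    (g : E) (f : ℝ → E) (hf : ContinuousOn f (Icc 0 T))
    (Bε : ℝ → E →L[ℝ] E) (Nq : ℝ) (hNq : 0 < Nq)
    (hBlog : ∀ ε ∈ Ioc (0 : ℝ) 1, ‖Bε ε‖ ≤ Nq * Real.log (1 / ε))
    (uε : ℝ → ℝ → E)
    (huc : ∀ ε ∈ Ioc (0 : ℝ) 1, ContinuousOn (uε ε) (Icc 0 T))
    (humild : ∀ ε ∈ Ioc (0 : ℝ) 1, ∀ t ∈ Icc (0 : ℝ) T,
      uε ε t = Tt t g + ∫ s in (0 : ℝ)..t, Tt (t - s) (f s - Bε ε (uε ε s))) :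
    ∃ C > (0 : ℝ), ∃ N : ℝ, 0 ≤ N ∧ ∀ ε ∈ Ioc (0 : ℝ) 1, ∀ t ∈ Icc (0 : ℝ) T,
      ‖uε ε t‖ ≤ C * ε ^ (-N) :=
  very_weak_solution_moderate_general T hT M w hM hw Tt hTbound g f hf Bε Nq hNq hBlog uε huc humild
end

section
/- (Convergence of the chaos expansion of the solution.) Let E be a real Banach space, T > 0, K > 0, and let p₁, p₂, r be real numbers with r ≥ p₁ and r ≥ p₂. Let (g_γ)_{γ∈𝓘} be a family in E, let (f_γ)_{γ∈𝓘} and (u_γ)_{γ∈𝓘} be families of continuous functions [0,T] → E, and assume the per-coefficient estimate ‖u_γ(t)‖_E ≤ K ( ‖g_γ‖_E + ∫_0^t ‖f_γ(s)‖_E ds ) for all γ ∈ 𝓘 and t ∈ [0,T]. If ∑_{γ∈𝓘} ‖g_γ‖²_E (2ℕ)^{-p₂γ} < ∞ and ∑_{γ∈𝓘} (sup_{t∈[0,T]} ‖f_γ(t)‖_E)² (2ℕ)^{-p₁γ} < ∞, then ∑_{γ∈𝓘} (sup_{t∈[0,T]} ‖u_γ(t)‖_E)² (2ℕ)^{-rγ}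 ≤ 2K² ( ∑_{γ∈𝓘} ‖g_γ‖²_E (2ℕ)^{-p₂γ} + T² ∑_{γ∈𝓘} (sup_{t∈[0,T]} ‖f_γ(t)‖_E)² (2ℕ)^{-p₁γ} ) < ∞. -/
open Set MeasureTheory

lemma kondratievWeight_pos (r : ℝ) (γ : ℕ →₀ ℕ) : 0 < kondratievWeight r γ :=
  Finset.prod_pos fun _ _ => Real.rpow_pos_of_pos (by positivity) _

lemma kondratievWeight_monotone (γ : ℕ →₀ ℕ) : Monotone (kondratievWeight · γ) :=
  fun _ _ hpr => Finset.prod_le_prod (fun _ _ => (Real.rpow_pos_of_pos (by positivity) _).le)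
    fun i _ => Real.rpow_le_rpow_of_exponent_le (by linarith [i.cast_nonneg (α := ℝ)])
      (mul_le_mul_of_nonneg_right hpr (γ i).cast_nonneg)

lemma IsCompact.bddAbove_range_norm {X E : Type*} [TopologicalSpace X] [NormedAddCommGroup E]
    {s : Set X} (hs : IsCompact s) {φ : X → E} (hφ : ContinuousOn φ s) :
    BddAbove (range fun x : s => ‖φ x‖) := by
  simpa only [image_eq_range] using (hs.image_of_continuousOn hφ.norm).bddAbove

lemma intervalIntegral_norm_le_mul_iSup {E : Type*} [NormedAddCommGroup E] {φ : ℝ → E}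
    {a b t : ℝ} (hφ : ContinuousOn φ (Icc a b)) (ht : t ∈ Icc a b) :
    ∫ s in a..t, ‖φ s‖ ≤ (b - a) * ⨆ s : Icc a b, ‖φ s‖ := by
  have hsub : Icc a t ⊆ Icc a b := Icc_subset_Icc_right ht.2
  have hM : 0 ≤ ⨆ s : Icc a b, ‖φ s‖ := Real.iSup_nonneg fun _ => norm_nonneg _
  calc ∫ s in a..t, ‖φ s‖ ≤ ∫ _ in a..t, ⨆ s : Icc a b, ‖φ s‖ :=
        intervalIntegral.integral_mono_on ht.1
          ((hφ.norm.mono hsub).intervalIntegrable_of_Icc ht.1) intervalIntegrable_const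
          fun s hs => le_ciSup (isCompact_Icc.bddAbove_range_norm hφ) ⟨s, hsub hs⟩
    _ = (t - a) * ⨆ s : Icc a b, ‖φ s‖ := by simp
    _ ≤ (b - a) * ⨆ s : Icc a b, ‖φ s‖ := by gcongr; exact ht.2

lemma sq_le_two_mul_sq_mul_sq_add_sq_of_le_mul_add {m K x y : ℝ} (hm : 0 ≤ m) (h : m ≤ K * (x + y)) :
    m ^ 2 ≤ 2 * K ^ 2 * (x ^ 2 + y ^ 2) :=
  calc m ^ 2 ≤ (K * (x + y)) ^ 2 := pow_le_pow_left₀ hm h 2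
    _ = K ^ 2 * (x + y) ^ 2 := mul_pow K (x + y) 2
    _ ≤ K ^ 2 * (2 * (x ^ 2 + y ^ 2)) := by gcongr; exact add_sq_le
    _ = 2 * K ^ 2 * (x ^ 2 + y ^ 2) := by ring

lemma summable_and_tsum_le_of_le_mul_add {ι : Type*} {x a b : ι → ℝ} {C D : ℝ}
    (hx : ∀ i, 0 ≤ x i) (hle : ∀ i, x i ≤ C * (a i + D * b i))
    (ha : Summable a) (hb : Summable b) :
    Summable x ∧ ∑' i, x i ≤ C * (∑' i, a i + D * ∑' i, b i) := by
  have hab : Summable fun i => C * (a i + D * b i) := (ha.add (hb.mul_left D)).mul_left C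
  have hxs : Summable x := hab.of_nonneg_of_le hx hle
  refine ⟨hxs, ?_⟩
  calc ∑' i, x i ≤ ∑' i, C * (a i + D * b i) := hxs.tsum_le_tsum hle hab
    _ = C * (∑' i, a i + D * ∑' i, b i) := by
      rw [tsum_mul_left, ha.tsum_add (hb.mul_left D), tsum_mul_left]

theorem chaos_expansion_convergence_general
    {E : Type*} [NormedAddCommGroup E]
    (T K : ℝ) (hT : 0 < T) (hK : 0 < K)
    (p₁ p₂ r : ℝ) (hr₁ : p₁ ≤ r) (hr₂ : p₂ ≤ r)
    (g : (ℕ →₀ ℕ) → E) (f u : (ℕ →₀ ℕ) → ℝ → E)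
    (hf : ∀ γ : ℕ →₀ ℕ, ContinuousOn (f γ) (Icc 0 T))
    (hest : ∀ γ : ℕ →₀ ℕ, ∀ t ∈ Icc (0 : ℝ) T,
      ‖u γ t‖ ≤ K * (‖g γ‖ + ∫ s in (0 : ℝ)..t, ‖f γ s‖))
    (hg : Summable (fun γ : ℕ →₀ ℕ => ‖g γ‖ ^ 2 * kondratievWeight (-p₂) γ))
    (hfs : Summable (fun γ : ℕ →₀ ℕ =>
      (⨆ t : Icc (0 : ℝ) T, ‖f γ ↑t‖) ^ 2 * kondratievWeight (-p₁) γ)) :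
    Summable (fun γ : ℕ →₀ ℕ =>
      (⨆ t : Icc (0 : ℝ) T, ‖u γ ↑t‖) ^ 2 * kondratievWeight (-r) γ) ∧
    ∑' γ : ℕ →₀ ℕ, (⨆ t : Icc (0 : ℝ) T, ‖u γ ↑t‖) ^ 2 * kondratievWeight (-r) γ ≤
      2 * K ^ 2 * ((∑' γ : ℕ →₀ ℕ, ‖g γ‖ ^ 2 * kondratievWeight (-p₂) γ) +
        T ^ 2 * ∑' γ : ℕ →₀ ℕ,
          (⨆ t : Icc (0 : ℝ) T, ‖f γ ↑t‖) ^ 2 * kondratievWeight (-p₁) γ) := by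
  have : Nonempty (Icc 0 T) := ⟨⟨0, le_rfl, hT.le⟩⟩
  refine summable_and_tsum_le_of_le_mul_add
    (fun γ => mul_nonneg (sq_nonneg _) (kondratievWeight_pos _ γ).le) (fun γ => ?_) hg hfs
  set Mf := ⨆ t : Icc (0 : ℝ) T, ‖f γ t‖
  have hsup : ⨆ t : Icc (0 : ℝ) T, ‖u γ t‖ ≤ K * (‖g γ‖ + T * Mf) :=
    ciSup_le fun t => (hest γ t t.2).trans <| mul_le_mul_of_nonneg_left (by
      gcongr
      simpa using intervalIntegral_norm_le_mul_iSup (hf γ) t.2) hK.le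
  calc (⨆ t : Icc (0 : ℝ) T, ‖u γ t‖) ^ 2 * kondratievWeight (-r) γ
      ≤ 2 * K ^ 2 * (‖g γ‖ ^ 2 + (T * Mf) ^ 2) * kondratievWeight (-r) γ :=
        mul_le_mul_of_nonneg_right (sq_le_two_mul_sq_mul_sq_add_sq_of_le_mul_add
          (Real.iSup_nonneg fun _ => norm_nonneg _) hsup) (kondratievWeight_pos _ γ).le
    _ = 2 * K ^ 2 * (‖g γ‖ ^ 2 * kondratievWeight (-r) γ +
          T ^ 2 * (Mf ^ 2 * kondratievWeight (-r) γ)) := by ring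
    _ ≤ 2 * K ^ 2 * (‖g γ‖ ^ 2 * kondratievWeight (-p₂) γ +
          T ^ 2 * (Mf ^ 2 * kondratievWeight (-p₁) γ)) := by
        gcongr <;> apply kondratievWeight_monotone <;> linarith

/-- convergence of the chaos expansion of the solution: from the
per-coefficient a priori estimate
`‖u_γ(t)‖ ≤ K (‖g_γ‖ + ∫_0^t ‖f_γ(s)‖ ds)` and the summability of the weighted data
norms, the weighted sum of squared sup-norms of the solution coefficients converges,
with the explicit bound `2K² (∑_γ ‖g_γ‖² (2ℕ)^{-p₂γ} + T² ∑_γ (sup_t ‖f_γ(t)‖)² (2ℕ)^{-p₁γ})`. -/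
theorem chaos_expansion_convergence
    {E : Type*} [NormedAddCommGroup E]
    (T K : ℝ) (hT : 0 < T) (hK : 0 < K)
    (p₁ p₂ r : ℝ) (hr₁ : p₁ ≤ r) (hr₂ : p₂ ≤ r)
    (g : (ℕ →₀ ℕ) → E) (f u : (ℕ →₀ ℕ) → ℝ → E)
    (hf : ∀ γ : ℕ →₀ ℕ, ContinuousOn (f γ) (Icc 0 T))
    (hu : ∀ γ : ℕ →₀ ℕ, ContinuousOn (u γ) (Icc 0 T))
    (hest : ∀ γ : ℕ →₀ ℕ, ∀ t ∈ Icc (0 : ℝ) T,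
      ‖u γ t‖ ≤ K * (‖g γ‖ + ∫ s in (0 : ℝ)..t, ‖f γ s‖))
    (hg : Summable (fun γ : ℕ →₀ ℕ => ‖g γ‖ ^ 2 * kondratievWeight (-p₂) γ))
    (hfs : Summable (fun γ : ℕ →₀ ℕ =>
      (⨆ t : Icc (0 : ℝ) T, ‖f γ ↑t‖) ^ 2 * kondratievWeight (-p₁) γ)) :
    Summable (fun γ : ℕ →₀ ℕ =>
      (⨆ t : Icc (0 : ℝ) T, ‖u γ ↑t‖) ^ 2 * kondratievWeight (-r) γ) ∧
    ∑' γ : ℕ →₀ ℕ, (⨆ t : Icc (0 : ℝ) T, ‖u γ ↑t‖) ^ 2 * kondratievWeight (-r) γ ≤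
      2 * K ^ 2 * ((∑' γ : ℕ →₀ ℕ, ‖g γ‖ ^ 2 * kondratievWeight (-p₂) γ) +
        T ^ 2 * ∑' γ : ℕ →₀ ℕ,
          (⨆ t : Icc (0 : ℝ) T, ‖f γ ↑t‖) ^ 2 * kondratievWeight (-p₁) γ) :=
  chaos_expansion_convergence_general T K hT hK p₁ p₂ r hr₁ hr₂ g f u hf hest hg hfs
end
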